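/- The loop T_L satisfies the weak inverse property x·(y·x)⁻¹ = y⁻¹ and the anti-automorphic inverse property (x·y)⁻¹ = y⁻¹·x⁻¹, for all x, y ∈ T_L. -/

import Mathlib

/-- Iterated Cayley–Dickson doubling starting from `ℝ`. -/
def CD : ℕ → Type
  | 0 => ℝ
  | n + 1 => CD n × CD n

instance cdAddCommGroup : ∀ n, AddCommGroup (CD n)
  | 0 => inferInstanceAs (AddCommGroup ℝ)
  | n + 1 => letI := cdAddCommGroup n; inferInstanceAs (AddCommGroup (CD n × CD n))

noncomputable instance cdModule : ∀ n, Module ℝ (CD n)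
  | 0 => inferInstanceAs (Module ℝ ℝ)
  | n + 1 => letI := cdModule n; inferInstanceAs (Module ℝ (CD n × CD n))

/-- Cayley–Dickson conjugation, starting from the identity on `ℝ`. -/
def cdConj : ∀ n, CD n → CD n
  | 0, x => x
  | n + 1, x => (cdConj n x.1, -x.2)

/-- Cayley–Dickson multiplication: `(a,b)(c,d) = (ac − d b̄, ā d + c b)`. -/
def cdMul : ∀ n, CD n → CD n → CD n
  | 0, x, y => @Mul.mul ℝ _ x y
  | n + 1, x, y =>
      (cdMul n x.1 y.1 - cdMul n y.2 (cdConj n x.2),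
       cdMul n (cdConj n x.1) y.2 + cdMul n y.1 x.2)

instance cdMulInst (n : ℕ) : Mul (CD n) := ⟨cdMul n⟩

instance cdOne : ∀ n, One (CD n)
  | 0 => ⟨(1 : ℝ)⟩
  | n + 1 => letI := cdOne n; ⟨((1 : CD n), 0)⟩

/-- The standard basis elements: under a doubling step `A → A × A`, a basis element
`e k` of `A` gives `e k = (e k, 0)` and `e (k + dim A) = (0, e k)`. -/
def cdE : ∀ n, ℕ → CD n
  | 0, _ => (1 : ℝ)
  | n + 1, k => if k < 2 ^ n then (cdE n k, 0) else (0, cdE n (k - 2 ^ n))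

/-- The trigintaduonions: the 32-dimensional real Cayley–Dickson algebra. -/
abbrev TT := CD 5

/-- The 32 standard basis elements `e 0 = 1, e 1, …, e 31` of `𝕋`. -/
def e (i : ℕ) : TT := cdE 5 i

/-- The trigintaduonion loop `T_L = {±e 0, ±e 1, …, ±e 31}`. -/
def TL : Set TT := {x | ∃ i < 32, x = e i ∨ x = -e i}

/-- A subloop of `T_L`: a nonempty subset of `T_L` closed under multiplication. -/
def IsSubloop (N : Set TT) : Prop :=
  N ⊆ TL ∧ N.Nonempty ∧ ∀ x ∈ N, ∀ y ∈ N, x * y ∈ N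

/-- Two subsets of `T_L` are isomorphic (as loops) if some bijection between them
preserves multiplication. -/
def LoopIso (A B : Set TT) : Prop :=
  ∃ f : TT → TT, Set.BijOn f A B ∧ ∀ x ∈ A, ∀ y ∈ A, f (x * y) = f x * f y

/-!
By the doubling formula, the product of two signed basis elements `±e i`, `±e j` of a
Cayley–Dickson algebra is again a signed basis element `±e k`, with `k` and the sign given by
recursive tables in `i` and `j`. So `T_L` is the image of a multiplicative map from a 64-element
magma on `Bool × Fin 32`, under which the inverse of `T_L` corresponds to
`(s, i) ↦ (s xor [i ≠ 0], i)`. Both identities thereby reduce to a finite check in that magma.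
-/

def negIf {α : Type*} [Neg α] (s : Bool) (x : α) : α := if s then -x else x

section NegIf

variable {α : Type*}

@[simp] theorem negIf_false [Neg α] (x : α) : negIf false x = x := rfl

@[simp] theorem negIf_true [Neg α] (x : α) : negIf true x = -x := rfl

theorem negIf_negIf [InvolutiveNeg α] (s t : Bool) (x : α) :
    negIf s (negIf t x) = negIf (s ^^ t) x := by
  cases s <;> cases t <;> simp

theorem negIf_zero [NegZeroClass α] (s : Bool) : negIf s (0 : α) = 0 := by
  cases s <;> simp

end NegIf

section CayleyDickson

theorem cdConj_zero : ∀ n, cdConj n 0 = 0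
  | 0 => rfl
  | n + 1 => by
    show ((cdConj n 0, -0) : CD n × CD n) = (0, 0)
    rw [cdConj_zero n, neg_zero]

theorem cdConj_neg : ∀ n (x : CD n), cdConj n (-x) = -cdConj n x
  | 0, _ => rfl
  | n + 1, x => by
    show ((cdConj n (-x.1), -(-x.2)) : CD n × CD n) = (-cdConj n x.1, -(-x.2))
    rw [cdConj_neg n]

mutual

theorem cdMul_zero_left : ∀ n (x : CD n), cdMul n 0 x = 0
  | 0, x => zero_mul (show ℝ from x)
  | n + 1, x => by
    show ((cdMul n 0 x.1 - cdMul n x.2 (cdConj n 0),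
      cdMul n (cdConj n 0) x.2 + cdMul n x.1 0) : CD n × CD n) = (0, 0)
    rw [cdConj_zero, cdMul_zero_left n, cdMul_zero_right n, cdMul_zero_left n,
      cdMul_zero_right n, sub_zero, add_zero]

theorem cdMul_zero_right : ∀ n (x : CD n), cdMul n x 0 = 0
  | 0, x => mul_zero (show ℝ from x)
  | n + 1, x => by
    show ((cdMul n x.1 0 - cdMul n 0 (cdConj n x.2),
      cdMul n (cdConj n x.1) 0 + cdMul n 0 x.2) : CD n × CD n) = (0, 0)
    rw [cdMul_zero_left n, cdMul_zero_right n, cdMul_zero_left n,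
      cdMul_zero_right n, sub_zero, add_zero]

end

mutual

theorem cdMul_neg_left : ∀ n (x y : CD n), cdMul n (-x) y = -cdMul n x y
  | 0, x, y => neg_mul (show ℝ from x) y
  | n + 1, x, y => by
    show ((cdMul n (-x.1) y.1 - cdMul n y.2 (cdConj n (-x.2)),
      cdMul n (cdConj n (-x.1)) y.2 + cdMul n y.1 (-x.2)) : CD n × CD n)
      = (-(cdMul n x.1 y.1 - cdMul n y.2 (cdConj n x.2)),
         -(cdMul n (cdConj n x.1) y.2 + cdMul n y.1 x.2))
    rw [cdConj_neg, cdConj_neg, cdMul_neg_left n, cdMul_neg_left n, cdMul_neg_right n,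
      cdMul_neg_right n, neg_sub', neg_add]

theorem cdMul_neg_right : ∀ n (x y : CD n), cdMul n x (-y) = -cdMul n x y
  | 0, x, y => mul_neg (show ℝ from x) y
  | n + 1, x, y => by
    show ((cdMul n x.1 (-y.1) - cdMul n (-y.2) (cdConj n x.2),
      cdMul n (cdConj n x.1) (-y.2) + cdMul n (-y.1) x.2) : CD n × CD n)
      = (-(cdMul n x.1 y.1 - cdMul n y.2 (cdConj n x.2)),
         -(cdMul n (cdConj n x.1) y.2 + cdMul n y.1 x.2))
    rw [cdMul_neg_left n, cdMul_neg_left n, cdMul_neg_right n,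
      cdMul_neg_right n, neg_sub', neg_add]

end

variable {n : ℕ}

theorem cdMul_mk (a b c d : CD n) :
    cdMul (n + 1) (a, b) (c, d)
      = ((cdMul n a c - cdMul n d (cdConj n b),
          cdMul n (cdConj n a) d + cdMul n c b) : CD (n + 1)) :=
  rfl

-- `simp` leaves `(x, 0) = (x, 0)` with the two sides typed `CD (n + 1)` and `CD n × CD n`.
theorem cdMul_inl_inl (a c : CD n) :
    cdMul (n + 1) (a, 0) (c, 0) = ((cdMul n a c, 0) : CD (n + 1)) := by
  simp only [cdMul_mk, cdConj_zero, cdMul_zero_right, sub_zero, add_zero]; rfl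

theorem cdMul_inl_inr (a d : CD n) :
    cdMul (n + 1) (a, 0) (0, d) = ((0, cdMul n (cdConj n a) d) : CD (n + 1)) := by
  simp only [cdMul_mk, cdConj_zero, cdMul_zero_right, sub_zero, add_zero]; rfl

theorem cdMul_inr_inl (b c : CD n) :
    cdMul (n + 1) (0, b) (c, 0) = ((0, cdMul n c b) : CD (n + 1)) := by
  simp only [cdMul_mk, cdMul_zero_left, cdMul_zero_right, sub_zero, zero_add]; rfl

theorem cdMul_inr_inr (b d : CD n) :
    cdMul (n + 1) (0, b) (0, d) = ((-cdMul n d (cdConj n b), 0) : CD (n + 1)) := by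
  simp only [cdMul_mk, cdConj_zero, cdMul_zero_left, zero_sub, add_zero]; rfl

theorem negIf_cd_mk (s : Bool) (a b : CD n) :
    negIf (α := CD (n + 1)) s (a, b) = ((negIf s a, negIf s b) : CD (n + 1)) := by
  cases s <;> rfl

theorem cdMul_negIf_left (s : Bool) (x y : CD n) :
    cdMul n (negIf s x) y = negIf s (cdMul n x y) := by
  cases s
  exacts [rfl, cdMul_neg_left n x y]

theorem cdMul_negIf_right (s : Bool) (x y : CD n) :
    cdMul n x (negIf s y) = negIf s (cdMul n x y) := by
  cases s
  exacts [rfl, cdMul_neg_right n x y]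

theorem cdE_succ_of_lt {k : ℕ} (h : k < 2 ^ n) : cdE (n + 1) k = ((cdE n k, 0) : CD (n + 1)) :=
  if_pos h

theorem cdE_succ_add_two_pow (k : ℕ) : cdE (n + 1) (k + 2 ^ n) = ((0, cdE n k) : CD (n + 1)) := by
  refine (if_neg (by omega)).trans ?_
  rw [Nat.add_sub_cancel]

theorem cdConj_cdE : ∀ {n i : ℕ}, i < 2 ^ n → cdConj n (cdE n i) = negIf (i != 0) (cdE n i)
  | 0, i, hi => by
    obtain rfl : i = 0 := by simpa using hi
    rfl
  | n + 1, i, hi => by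
    by_cases h : i < 2 ^ n
    · rw [cdE_succ_of_lt h, negIf_cd_mk, negIf_zero, ← cdConj_cdE h]
      show ((cdConj n (cdE n i), -0) : CD (n + 1)) = _
      rw [neg_zero]
    · obtain ⟨i, rfl⟩ : ∃ k, i = k + 2 ^ n := ⟨i - 2 ^ n, by omega⟩
      have hi0 : (i + 2 ^ n != 0) = true := by simp
      rw [cdE_succ_add_two_pow, negIf_cd_mk, negIf_zero, hi0]
      show ((cdConj n 0, -cdE n i) : CD (n + 1)) = _
      rw [cdConj_zero]; rfl

def cdBasisIdx : ℕ → ℕ → ℕ → ℕ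
  | 0, _, _ => 0
  | n + 1, i, j =>
    if i < 2 ^ n then
      if j < 2 ^ n then cdBasisIdx n i j else cdBasisIdx n i (j - 2 ^ n) + 2 ^ n
    else
      if j < 2 ^ n then cdBasisIdx n j (i - 2 ^ n) + 2 ^ n
      else cdBasisIdx n (j - 2 ^ n) (i - 2 ^ n)

def cdBasisNeg : ℕ → ℕ → ℕ → Bool
  | 0, _, _ => false
  | n + 1, i, j =>
    if i < 2 ^ n then
      if j < 2 ^ n then cdBasisNeg n i j else (i != 0) ^^ cdBasisNeg n i (j - 2 ^ n)
    else
      if j < 2 ^ n then cdBasisNeg n j (i - 2 ^ n)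
      else (i - 2 ^ n == 0) ^^ cdBasisNeg n (j - 2 ^ n) (i - 2 ^ n)

theorem cdBasisIdx_lt : ∀ {n i j : ℕ}, i < 2 ^ n → j < 2 ^ n → cdBasisIdx n i j < 2 ^ n
  | 0, _, _, _, _ => by simp [cdBasisIdx]
  | n + 1, i, j, hi, hj => by
    rw [pow_succ] at hi hj ⊢
    rw [cdBasisIdx]
    split_ifs with h h' h'
    · exact (cdBasisIdx_lt h h').trans (by omega)
    · have := cdBasisIdx_lt h (show j - 2 ^ n < 2 ^ n by omega); omega
    · have := cdBasisIdx_lt h' (show i - 2 ^ n < 2 ^ n by omega); omega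
    · have := cdBasisIdx_lt (show j - 2 ^ n < 2 ^ n by omega) (show i - 2 ^ n < 2 ^ n by omega)
      omega

theorem cdE_mul_cdE : ∀ {n i j : ℕ}, i < 2 ^ n → j < 2 ^ n →
    cdMul n (cdE n i) (cdE n j) = negIf (cdBasisNeg n i j) (cdE n (cdBasisIdx n i j))
  | 0, _, _, _, _ => mul_one (1 : ℝ)
  | n + 1, i, j, hi, hj => by
    rw [pow_succ] at hi hj
    by_cases h : i < 2 ^ n <;> by_cases h' : j < 2 ^ n
    · rw [cdE_succ_of_lt h, cdE_succ_of_lt h', cdMul_inl_inl, cdE_mul_cdE h h', cdBasisNeg,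
        cdBasisIdx, if_pos h, if_pos h', if_pos h, if_pos h', cdE_succ_of_lt (cdBasisIdx_lt h h'),
        negIf_cd_mk, negIf_zero]
    · obtain ⟨j, rfl⟩ : ∃ k, j = k + 2 ^ n := ⟨j - 2 ^ n, by omega⟩
      have hj' : j < 2 ^ n := by omega
      rw [cdE_succ_of_lt h, cdE_succ_add_two_pow, cdMul_inl_inr, cdConj_cdE h, cdMul_negIf_left,
        cdE_mul_cdE h hj', negIf_negIf, cdBasisNeg, cdBasisIdx, if_pos h, if_neg h', if_pos h,
        if_neg h', Nat.add_sub_cancel, cdE_succ_add_two_pow, negIf_cd_mk, negIf_zero]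
    · obtain ⟨i, rfl⟩ : ∃ k, i = k + 2 ^ n := ⟨i - 2 ^ n, by omega⟩
      have hi' : i < 2 ^ n := by omega
      rw [cdE_succ_add_two_pow, cdE_succ_of_lt h', cdMul_inr_inl,
        cdE_mul_cdE h' hi', cdBasisNeg, cdBasisIdx, if_neg h, if_pos h', if_neg h,
        if_pos h', Nat.add_sub_cancel, cdE_succ_add_two_pow, negIf_cd_mk, negIf_zero]
    · obtain ⟨i, rfl⟩ : ∃ k, i = k + 2 ^ n := ⟨i - 2 ^ n, by omega⟩
      obtain ⟨j, rfl⟩ : ∃ k, j = k + 2 ^ n := ⟨j - 2 ^ n, by omega⟩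
      have hi' : i < 2 ^ n := by omega
      have hj' : j < 2 ^ n := by omega
      rw [cdE_succ_add_two_pow, cdE_succ_add_two_pow, cdMul_inr_inr, cdConj_cdE hi',
        cdMul_negIf_right, cdE_mul_cdE hj' hi', negIf_negIf, ← negIf_true, negIf_negIf,
        cdBasisNeg, cdBasisIdx, if_neg h, if_neg h', if_neg h, if_neg h', Nat.add_sub_cancel,
        Nat.add_sub_cancel, cdE_succ_of_lt (cdBasisIdx_lt hj' hi'), negIf_cd_mk, negIf_zero,
        ← Bool.xor_assoc, Bool.true_xor, bne, Bool.not_not]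

end CayleyDickson

def SignedIdx (n : ℕ) : Type := Bool × Fin (2 ^ n)

namespace SignedIdx

variable {n : ℕ}

instance : Fintype (SignedIdx n) := inferInstanceAs (Fintype (Bool × Fin (2 ^ n)))

instance : DecidableEq (SignedIdx n) := inferInstanceAs (DecidableEq (Bool × Fin (2 ^ n)))

instance : Mul (SignedIdx n) :=
  ⟨fun a b => (a.1 ^^ b.1 ^^ cdBasisNeg n a.2 b.2,
    ⟨cdBasisIdx n a.2 b.2, cdBasisIdx_lt a.2.2 b.2.2⟩)⟩

instance : Inv (SignedIdx n) := ⟨fun a => ((a.2.val != 0) ^^ a.1, a.2)⟩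

def toCD (a : SignedIdx n) : CD n := negIf a.1 (cdE n a.2)

theorem toCD_mul (a b : SignedIdx n) : (a * b).toCD = a.toCD * b.toCD := by
  show negIf _ _ = cdMul n (negIf _ _) (negIf _ _)
  rw [cdMul_negIf_left, cdMul_negIf_right, cdE_mul_cdE a.2.2 b.2.2, negIf_negIf, negIf_negIf]
  rfl

theorem toCD_inv (a : SignedIdx n) : a⁻¹.toCD = negIf (a.2.val != 0) a.toCD :=
  (negIf_negIf _ _ _).symm

theorem weakInverse_and_antiAutomorphicInverse_five (a b : SignedIdx 5) :
    a * (b * a)⁻¹ = b⁻¹ ∧ (a * b)⁻¹ = b⁻¹ * a⁻¹ := by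
  revert a b
  decide +kernel

end SignedIdx

theorem exists_toCD_of_mem_TL {x : TT} (hx : x ∈ TL) : ∃ a : SignedIdx 5, a.toCD = x := by
  obtain ⟨i, hi, rfl | rfl⟩ := hx
  exacts [⟨(false, ⟨i, hi⟩), rfl⟩, ⟨(true, ⟨i, hi⟩), rfl⟩]

/-- `T_L` satisfies the weak inverse property `x·(y·x)⁻¹ = y⁻¹` and the
anti-automorphic inverse property `(x·y)⁻¹ = y⁻¹·x⁻¹`, where `e 0⁻¹ = e 0`,
`(-e 0)⁻¹ = -e 0`, and `(±e i)⁻¹ = ∓e i` for `1 ≤ i ≤ 31`. -/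
theorem stmt15 (inv : TT → TT)
    (h0 : inv (e 0) = e 0) (h0' : inv (-e 0) = -e 0)
    (hi : ∀ i, 1 ≤ i → i ≤ 31 → inv (e i) = -e i ∧ inv (-e i) = e i) :
    ∀ x ∈ TL, ∀ y ∈ TL, x * inv (y * x) = inv y ∧ inv (x * y) = inv y * inv x := by
  have inv_toCD : ∀ a : SignedIdx 5, inv a.toCD = a⁻¹.toCD := by
    intro a
    rw [SignedIdx.toCD_inv]
    obtain ⟨s, i, hi32⟩ := a
    obtain rfl | hi0 := eq_or_ne i 0
    · cases s
      exacts [h0, h0']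
    · rw [show (i != 0) = true from bne_iff_ne.2 hi0]
      obtain ⟨inv_pos, inv_neg⟩ := hi i (by omega) (by omega)
      cases s
      exacts [inv_pos, inv_neg.trans (neg_neg _).symm]
  rintro x hx y hy
  obtain ⟨a, rfl⟩ := exists_toCD_of_mem_TL hx
  obtain ⟨b, rfl⟩ := exists_toCD_of_mem_TL hy
  obtain ⟨weak_inv, anti_aut⟩ := SignedIdx.weakInverse_and_antiAutomorphicInverse_five a b
  simp only [← SignedIdx.toCD_mul, inv_toCD, weak_inv, anti_aut, and_self]
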